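/- arXiv:2407.20849 — 2 statements merged into one kernel-verified Lean document; each statement's English description precedes it below -/
import Mathlib

section
/- (Cameron) Let G be a finite permutation group on Ω. The set 𝓘(G,Ω) of cardinalities of irredundant bases for G on Ω is an interval of natural numbers: if a, b ∈ 𝓘(G,Ω) and a ≤ c ≤ b, then c ∈ 𝓘(G,Ω). -/
/-!
Drop from a list of points every point fixed by the pointwise stabilizer of the points kept
before it; this turns any base into an irredundant base with the same pointwise stabilizer, and
leaves an irredundant base unchanged. Given irredundant bases `X` and `Y`, prune the lists
`Y.take k ++ X` for `k = 0, …, |Y|`: the pruned lists have lengths `|X|` and `|Y|` at the two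
ends, and inserting one point into a list lengthens its pruning by at most one, so every length in
between is attained.
-/

/-- The pointwise stabilizer of a finite sequence of points. -/
def pStab (G : Type*) [Group G] {Ω : Type*} [MulAction G Ω] (l : List Ω) : Subgroup G :=
  ⨅ ω ∈ l, MulAction.stabilizer G ω

/-- `l` is an irredundant base: trivial pointwise stabilizer and a strictly
decreasing chain of successive pointwise stabilizers. -/
def IsIrrBase (G : Type*) [Group G] {Ω : Type*} [MulAction G Ω] (l : List Ω) : Prop :=
  pStab G l = ⊥ ∧ ∀ i < l.length, pStab G (l.take (i + 1)) < pStab G (l.take i)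

open MulAction

theorem Nat.exists_eq_of_le_add_one (f : ℕ → ℕ) {c : ℕ} :
    ∀ {n}, f 0 ≤ c → c ≤ f n → (∀ k < n, f (k + 1) ≤ f k + 1) → ∃ k ≤ n, f k = c
  | 0, h0, hn, _ => ⟨0, le_rfl, le_antisymm h0 hn⟩
  | n + 1, h0, hn, hstep => by
    by_cases hc : c ≤ f n
    · obtain ⟨k, hk, hkc⟩ := exists_eq_of_le_add_one f h0 hc fun k hk => hstep k (by omega)
      exact ⟨k, by omega, hkc⟩
    · exact ⟨n + 1, le_rfl, by have := hstep n (by omega); omega⟩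

section

variable {G : Type*} [Group G] {Ω : Type*} [MulAction G Ω]

@[simp]
lemma pStab_nil : pStab G ([] : List Ω) = ⊤ := by
  simp [pStab]

@[simp]
lemma pStab_cons (x : Ω) (l : List Ω) :
    pStab G (x :: l) = stabilizer G x ⊓ pStab G l := by
  simp [pStab, iInf_or, iInf_inf_eq]

@[simp]
lemma pStab_append (u v : List Ω) : pStab G (u ++ v) = pStab G u ⊓ pStab G v := by
  simp [pStab, iInf_or, iInf_inf_eq]

def IsIrredundant : Subgroup G → List Ω → Prop
  | _, [] => True
  | H, x :: l => ¬H ≤ stabilizer G x ∧ IsIrredundant (H ⊓ stabilizer G x) l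

lemma isIrredundant_iff (H : Subgroup G) (l : List Ω) :
    IsIrredundant H l ↔
      ∀ i < l.length, H ⊓ pStab G (l.take (i + 1)) < H ⊓ pStab G (l.take i) := by
  induction l generalizing H with
  | nil => simp [IsIrredundant]
  | cons x l ih =>
    simp only [IsIrredundant, ih, List.length_cons, Nat.forall_lt_succ_left, List.take_succ_cons,
      List.take_zero, pStab_cons, pStab_nil, inf_top_eq, inf_lt_left, inf_assoc]

lemma isIrrBase_iff (l : List Ω) :
    IsIrrBase G l ↔ IsIrredundant (⊤ : Subgroup G) l ∧ pStab G l = ⊥ := by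
  simp [IsIrrBase, isIrredundant_iff, and_comm]

open Classical in
noncomputable def prune : Subgroup G → List Ω → List Ω
  | _, [] => []
  | H, x :: l =>
    if H ≤ stabilizer G x then prune H l else x :: prune (H ⊓ stabilizer G x) l

lemma inf_pStab_prune (H : Subgroup G) (l : List Ω) :
    H ⊓ pStab G (prune H l) = H ⊓ pStab G l := by
  induction l generalizing H with
  | nil => rfl
  | cons x l ih =>
    by_cases h : H ≤ stabilizer G x
    · rw [prune, if_pos h, ih, pStab_cons, ← inf_assoc, inf_eq_left.2 h]
    · rw [prune, if_neg h, pStab_cons, pStab_cons, ← inf_assoc, ← inf_assoc, ih]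

lemma isIrredundant_prune (H : Subgroup G) (l : List Ω) : IsIrredundant H (prune H l) := by
  induction l generalizing H with
  | nil => trivial
  | cons x l ih =>
    by_cases h : H ≤ stabilizer G x
    · rw [prune, if_pos h]
      exact ih H
    · rw [prune, if_neg h]
      exact ⟨h, ih _⟩

lemma IsIrredundant.prune_eq {H : Subgroup G} {l : List Ω} (hl : IsIrredundant H l) :
    prune H l = l := by
  induction l generalizing H with
  | nil => rfl
  | cons x l ih => rw [prune, if_neg hl.1, ih hl.2]

@[simp]
lemma prune_bot (l : List Ω) : prune (⊥ : Subgroup G) l = [] := by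
  induction l with
  | nil => rfl
  | cons x l ih => rwa [prune, if_pos bot_le]

lemma prune_append (H : Subgroup G) (u v : List Ω) :
    prune H (u ++ v) = prune H u ++ prune (H ⊓ pStab G u) v := by
  induction u generalizing H with
  | nil => simp [prune]
  | cons x u ih =>
    by_cases h : H ≤ stabilizer G x
    · rw [List.cons_append, prune, if_pos h, prune, if_pos h, pStab_cons, ← inf_assoc,
        inf_eq_left.2 h, ih]
    · rw [List.cons_append, prune, if_neg h, prune, if_neg h, pStab_cons, ← inf_assoc, ih,
        List.cons_append]

lemma length_prune_mono {H K : Subgroup G} (hKH : K ≤ H) (l : List Ω) :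
    (prune K l).length ≤ (prune H l).length := by
  induction l generalizing H K with
  | nil => rfl
  | cons x l ih =>
    by_cases hH : H ≤ stabilizer G x
    · rw [prune, prune, if_pos hH, if_pos (hKH.trans hH)]
      exact ih hKH
    · by_cases hK : K ≤ stabilizer G x
      · rw [prune, prune, if_neg hH, if_pos hK, List.length_cons]
        exact (ih (le_inf hKH hK)).trans (Nat.le_succ _)
      · rw [prune, prune, if_neg hH, if_neg hK, List.length_cons, List.length_cons]
        exact Nat.succ_le_succ (ih (inf_le_inf_right _ hKH))

lemma length_prune_cons_le (H : Subgroup G) (x : Ω) (l : List Ω) :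
    (prune H (x :: l)).length ≤ (prune H l).length + 1 := by
  by_cases h : H ≤ stabilizer G x
  · rw [prune, if_pos h]
    exact Nat.le_succ _
  · rw [prune, if_neg h, List.length_cons]
    exact Nat.succ_le_succ (length_prune_mono inf_le_left l)

lemma length_prune_insert_le (H : Subgroup G) (u : List Ω) (x : Ω) (v : List Ω) :
    (prune H (u ++ x :: v)).length ≤ (prune H (u ++ v)).length + 1 := by
  rw [prune_append, prune_append, List.length_append, List.length_append, add_assoc]
  exact Nat.add_le_add_left (length_prune_cons_le _ x v) _

lemma isIrrBase_prune_top {l : List Ω} (hl : pStab G l = ⊥) :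
    IsIrrBase G (prune (⊤ : Subgroup G) l) := by
  refine (isIrrBase_iff _).2 ⟨isIrredundant_prune _ _, ?_⟩
  simpa [hl] using inf_pStab_prune (⊤ : Subgroup G) l

end

theorem irredundant_base_lengths_interval_general
    (G : Type*) [Group G] (Ω : Type*) [MulAction G Ω]
    (a b c : ℕ)
    (ha : ∃ l : List Ω, IsIrrBase G l ∧ l.length = a)
    (hb : ∃ l : List Ω, IsIrrBase G l ∧ l.length = b)
    (hac : a ≤ c) (hcb : c ≤ b) :
    ∃ l : List Ω, IsIrrBase G l ∧ l.length = c := by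
  obtain ⟨X, hX, rfl⟩ := ha
  obtain ⟨Y, hY, rfl⟩ := hb
  rw [isIrrBase_iff] at hX hY
  set f : ℕ → ℕ := fun k => (prune (⊤ : Subgroup G) (Y.take k ++ X)).length
  have hf_zero : f 0 = X.length := by simp [f, hX.1.prune_eq]
  have hf_length : f Y.length = Y.length := by
    simp [f, prune_append, hY.1.prune_eq, hY.2]
  have hf_step : ∀ k < Y.length, f (k + 1) ≤ f k + 1 := fun k hk => by
    simpa only [f, ← List.take_concat_get' Y k hk, List.append_assoc, List.singleton_append]
      using length_prune_insert_le _ _ _ _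
  obtain ⟨k, -, hk⟩ := Nat.exists_eq_of_le_add_one f (c := c) (by omega) (by omega) hf_step
  exact ⟨prune ⊤ (Y.take k ++ X), isIrrBase_prune_top (by simp [hX.2]), hk⟩

/-- (Cameron) The set of cardinalities of irredundant bases of a finite
permutation group is an interval of natural numbers. -/
theorem irredundant_base_lengths_interval
    (G : Type*) [Group G] [Finite G] (Ω : Type*) [Finite Ω] [MulAction G Ω]
    [FaithfulSMul G Ω] (a b c : ℕ)
    (ha : ∃ l : List Ω, IsIrrBase G l ∧ l.length = a)
    (hb : ∃ l : List Ω, IsIrrBase G l ∧ l.length = b)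
    (hac : a ≤ c) (hcb : c ≤ b) :
    ∃ l : List Ω, IsIrrBase G l ∧ l.length = c :=
  irredundant_base_lengths_interval_general G Ω a b c ha hb hac hcb
end

section
/- Let q = 2^{2m+1}, σ: ξ ↦ ξ^{2^{m+1}}, and let Δ be the Suzuki ovoid. For γ ∈ 𝔽_q^×, the map n_γ: (η₁,η₂,η₃) ↦ (γη₁, γ^{σ+1}η₂, γ^{σ+2}η₃), extended to fix ∞, is a well-defined permutation of Δ, and the set {n_γ : γ ∈ 𝔽_q^×} forms a cyclic group of order q − 1 under composition. -/
/-- The field automorphism `σ : ξ ↦ ξ^(2^(m+1))` of `𝔽_q`, `q = 2^(2m+1)`. -/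
def suzSigma (F : Type) [Field F] (m : ℕ) (x : F) : F := x ^ 2 ^ (m + 1)

/-- The Suzuki ovoid `Δ = {(η₁,η₂,η₃) : η₃ = η₁η₂ + η₁^(σ+2) + η₂^σ} ∪ {∞}`,
with `∞` encoded as `none`. -/
def suzukiOvoid (F : Type) [Field F] (m : ℕ) : Set (Option (F × F × F)) :=
  {x | x = none ∨ ∃ η₁ η₂ η₃ : F,
      x = some (η₁, η₂, η₃) ∧
        η₃ = η₁ * η₂ + suzSigma F m η₁ * η₁ ^ 2 + suzSigma F m η₂}
/-- The map `n_γ`, fixing `∞`. -/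
def suzN (F : Type) [Field F] (m : ℕ) (γ : F) :
    Option (F × F × F) → Option (F × F × F)
  | none => none
  | some (η₁, η₂, η₃) =>
      some (γ * η₁, suzSigma F m γ * γ * η₂, suzSigma F m γ * γ ^ 2 * η₃)

lemma suzSigma_mul (F : Type) [Field F] (m : ℕ) (a b : F) :
    suzSigma F m (a * b) = suzSigma F m a * suzSigma F m b := mul_pow _ _ _

lemma suzN_mul (F : Type) [Field F] (m : ℕ) (a b : F) :
    suzN F m (a * b) = suzN F m a ∘ suzN F m b := by
  funext x
  rcases x with _ | ⟨η₁, η₂, η₃⟩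
  · rfl
  · simp only [suzN, Function.comp, suzSigma_mul, Option.some.injEq, Prod.mk.injEq]
    refine ⟨by ring, by ring, by ring⟩

lemma suzN_one (F : Type) [Field F] (m : ℕ) : suzN F m 1 = id := by
  funext x
  rcases x with _ | ⟨η₁, η₂, η₃⟩
  · rfl
  · simp [suzN, suzSigma]

/-- `n_γ` as a permutation, for `γ` a unit. -/
def suzE (F : Type) [Field F] (m : ℕ) (γ : Fˣ) : Equiv.Perm (Option (F × F × F)) where
  toFun := suzN F m (γ : F)
  invFun := suzN F m ((γ⁻¹ : Fˣ) : F)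
  left_inv := fun x => by
    have h : suzN F m ((γ⁻¹ : Fˣ) : F) ∘ suzN F m (γ : F) = id := by
      rw [← suzN_mul, ← Units.val_mul, inv_mul_cancel, Units.val_one, suzN_one]
    exact congrFun h x
  right_inv := fun x => by
    have h : suzN F m (γ : F) ∘ suzN F m ((γ⁻¹ : Fˣ) : F) = id := by
      rw [← suzN_mul, ← Units.val_mul, mul_inv_cancel, Units.val_one, suzN_one]
    exact congrFun h x

lemma suzSigma_suzSigma (F : Type) [Field F] [Fintype F] (m : ℕ)
    (hF : Fintype.card F = 2 ^ (2 * m + 1)) (a : F) :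
    suzSigma F m (suzSigma F m a) = a ^ 2 := by
  have h : a ^ (2 ^ (2 * m + 1)) = a := by
    rw [← hF]; exact FiniteField.pow_card a
  have : suzSigma F m (suzSigma F m a) = a ^ (2 ^ (2 * m + 1) * 2) := by
    simp only [suzSigma, ← pow_mul, ← pow_add]
    ring_nf
  rw [this, pow_mul, h]

lemma suzN_mapsTo (F : Type) [Field F] [Fintype F] (m : ℕ)
    (hF : Fintype.card F = 2 ^ (2 * m + 1)) (γ : F) :
    Set.MapsTo (suzN F m γ) (suzukiOvoid F m) (suzukiOvoid F m) := by
  rintro x (rfl | ⟨η₁, η₂, η₃, rfl, h⟩)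
  · exact Or.inl rfl
  · refine Or.inr ⟨γ * η₁, suzSigma F m γ * γ * η₂, suzSigma F m γ * γ ^ 2 * η₃, rfl, ?_⟩
    rw [h]
    simp only [suzSigma_mul, suzSigma_suzSigma F m hF]
    ring

lemma suzE_mul (F : Type) [Field F] (m : ℕ) (a b : Fˣ) :
    suzE F m (a * b) = suzE F m a * suzE F m b :=
  Equiv.ext fun x => by
    show suzN F m ((a * b : Fˣ) : F) x = suzN F m (a : F) (suzN F m (b : F) x)
    rw [Units.val_mul, suzN_mul]; rfl

lemma suzE_inj (F : Type) [Field F] (m : ℕ) : Function.Injective (suzE F m) := by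
  intro a b hab
  have h1 : (suzE F m a) (some (1, 0, 0)) = (suzE F m b) (some (1, 0, 0)) := by rw [hab]
  simp only [suzE, Equiv.coe_fn_mk, suzN, mul_one, mul_zero,
    Option.some.injEq, Prod.mk.injEq] at h1
  exact Units.ext h1.1

/-- For `γ ∈ 𝔽_qˣ`, the map `n_γ` is a well-defined permutation of the Suzuki
ovoid, and the `n_γ` form a cyclic group of order `q - 1` under composition. -/
theorem suzN_cyclic (F : Type) [Field F] [Fintype F] (m : ℕ)
    (hF : Fintype.card F = 2 ^ (2 * m + 1)) :
    ∃ Φ : Fˣ →* Equiv.Perm (Option (F × F × F)),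
      (∀ γ : Fˣ, ⇑(Φ γ) = suzN F m (γ : F)) ∧
      Function.Injective Φ ∧
      (∀ γ : Fˣ, Set.BijOn (suzN F m (γ : F)) (suzukiOvoid F m) (suzukiOvoid F m)) ∧
      IsCyclic Φ.range ∧
      Nat.card Φ.range = 2 ^ (2 * m + 1) - 1 := by
  refine ⟨MonoidHom.mk' (suzE F m) (suzE_mul F m), fun γ => rfl, suzE_inj F m, ?_, ?_, ?_⟩
  · intro γ
    refine ⟨suzN_mapsTo F m hF (γ : F), (suzE F m γ).injective.injOn, ?_⟩
    intro y hy
    exact ⟨suzN F m ((γ⁻¹ : Fˣ) : F) y, suzN_mapsTo F m hF _ hy, (suzE F m γ).right_inv y⟩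
  · exact isCyclic_of_surjective _
      (MonoidHom.mk' (suzE F m) (suzE_mul F m)).rangeRestrict_surjective
  · rw [← Nat.card_congr (MonoidHom.ofInjective
      (f := MonoidHom.mk' (suzE F m) (suzE_mul F m)) (suzE_inj F m)).toEquiv,
      Nat.card_units, Nat.card_eq_fintype_card, hF]
end
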